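/- arXiv:1806.04369 — 2 statements merged into one kernel-verified Lean document; each statement's English description precedes it below -/
import Mathlib

section
/- Let p be an odd prime and let d, e, f be positive integers with f < d < e, and let G = M₂(p,d,e,f) with canonical generators a, b. Then G is p^{d−f}-abelian, i.e. (xy)^{p^{d−f}} = x^{p^{d−f}} y^{p^{d−f}} for all x, y ∈ G, and the center of G equals the subgroup generated by a^{p^{d−f}} and b^{p^{d−f}}. -/
/-- Relators for the group `M₁(p,d,e,f) = ⟨a, b ∣ a^(p^e) = b^(p^d) = 1, b⁻¹ab = a^(1+p^f)⟩`,
where `a` is generator `0` and `b` is generator `1`. -/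
def M1rels (p d e f : ℕ) : Set (FreeGroup (Fin 2)) :=
  {FreeGroup.of 0 ^ p ^ e, FreeGroup.of 1 ^ p ^ d,
    (FreeGroup.of 1)⁻¹ * FreeGroup.of 0 * FreeGroup.of 1 * (FreeGroup.of 0 ^ (1 + p ^ f))⁻¹}

/-- The metacyclic group `M₁(p,d,e,f) = ⟨a, b ∣ a^(p^e) = b^(p^d) = 1, b⁻¹ab = a^(1+p^f)⟩`. -/
abbrev M1 (p d e f : ℕ) : Type := PresentedGroup (M1rels p d e f)

/-- The canonical generator `a` of `M₁(p,d,e,f)`. -/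
def M1a (p d e f : ℕ) : M1 p d e f := PresentedGroup.of 0

/-- The canonical generator `b` of `M₁(p,d,e,f)`. -/
def M1b (p d e f : ℕ) : M1 p d e f := PresentedGroup.of 1

/-- Relators for the group `M₂(p,d,e,f) = ⟨a, b ∣ a^(p^d) = b^(p^e) = 1, b⁻¹ab = a^(1+p^f)⟩`,
where `a` is generator `0` and `b` is generator `1`. -/
def M2rels (p d e f : ℕ) : Set (FreeGroup (Fin 2)) :=
  {FreeGroup.of 0 ^ p ^ d, FreeGroup.of 1 ^ p ^ e,
    (FreeGroup.of 1)⁻¹ * FreeGroup.of 0 * FreeGroup.of 1 * (FreeGroup.of 0 ^ (1 + p ^ f))⁻¹}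

/-- The metacyclic group `M₂(p,d,e,f) = ⟨a, b ∣ a^(p^d) = b^(p^e) = 1, b⁻¹ab = a^(1+p^f)⟩`. -/
abbrev M2 (p d e f : ℕ) : Type := PresentedGroup (M2rels p d e f)

/-- The canonical generator `a` of `M₂(p,d,e,f)`. -/
def M2a (p d e f : ℕ) : M2 p d e f := PresentedGroup.of 0

/-- The canonical generator `b` of `M₂(p,d,e,f)`. -/
def M2b (p d e f : ℕ) : M2 p d e f := PresentedGroup.of 1

/-- Relators for the group
`M₃(p,d,e,h,f) = ⟨a, b ∣ a^(p^h) = 1, b^(p^(d+e-h)) = a^(p^d), b⁻¹ab = a^(1+p^f)⟩`,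
where `a` is generator `0` and `b` is generator `1`. -/
def M3rels (p d e h f : ℕ) : Set (FreeGroup (Fin 2)) :=
  {FreeGroup.of 0 ^ p ^ h, FreeGroup.of 1 ^ p ^ (d + e - h) * (FreeGroup.of 0 ^ p ^ d)⁻¹,
    (FreeGroup.of 1)⁻¹ * FreeGroup.of 0 * FreeGroup.of 1 * (FreeGroup.of 0 ^ (1 + p ^ f))⁻¹}

/-- The non-split metacyclic group
`M₃(p,d,e,h,f) = ⟨a, b ∣ a^(p^h) = 1, b^(p^(d+e-h)) = a^(p^d), b⁻¹ab = a^(1+p^f)⟩`. -/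
abbrev M3 (p d e h f : ℕ) : Type := PresentedGroup (M3rels p d e h f)

/-- The canonical generator `a` of `M₃(p,d,e,h,f)`. -/
def M3a (p d e h f : ℕ) : M3 p d e h f := PresentedGroup.of 0

/-- The canonical generator `b` of `M₃(p,d,e,h,f)`. -/
def M3b (p d e h f : ℕ) : M3 p d e h f := PresentedGroup.of 1

/-- `(α, β)` is an exact `(m,n)`-bicyclic pair of `G`: `α` has order `m`, `β` has order `n`,
`⟨α⟩ ∩ ⟨β⟩ = 1`, and `G = ⟨α⟩⟨β⟩`. -/
def IsExactBicyclicPair {G : Type*} [Group G] (m n : ℕ) (α β : G) : Prop :=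
  orderOf α = m ∧ orderOf β = n ∧
    Subgroup.zpowers α ⊓ Subgroup.zpowers β = ⊥ ∧
    ∀ g : G, ∃ i j : ℤ, g = α ^ i * β ^ j

/-!
Every element of `M₂(p,d,e,f)` can be written `b ^ j * a ^ i`, and with `r = 1 + p ^ f`,
`(b ^ j * a ^ i) ^ n = b ^ (j * n) * a ^ (i * (1 + r ^ j + ⋯ + r ^ (j * (n - 1))))`.
For odd `p`, a geometric sum `∑_{t < p ^ k} w ^ t` with `w ≡ 1 (mod p ^ f)` is `≡ p ^ k`
modulo `p ^ (f + k)`. Hence, for `q = p ^ (d - f)`, the `q`-th power of `b ^ j * a ^ i` is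
`b ^ (j * q) * a ^ (i * q)`, and the `q`-th power map is multiplicative since `r ^ l * q ≡ q`
modulo `p ^ d`.

The element `b ^ j * a ^ i` commutes with `a` iff `r ^ j ≡ 1 (mod p ^ d)`, which by lifting the
exponent means `q ∣ j`, and with `b` iff `p ^ d ∣ i * p ^ f`, i.e. `q ∣ i`. These reductions need
`a` to have order exactly `p ^ d`; this is seen from the action of `M₂` on `ZMod (p ^ d)` in which
`a` acts as `x ↦ x + 1` and `b` as `x ↦ r⁻¹ * x`.
-/

open Finset

section GeomSum

variable {R : Type*} [CommRing R]

theorem geom_sum_range_mul (x : R) (m n : ℕ) :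
    ∑ i ∈ range (m * n), x ^ i = (∑ i ∈ range m, x ^ i) * ∑ j ∈ range n, (x ^ m) ^ j := by
  induction n with
  | zero => simp
  | succ n ih =>
    rw [Nat.mul_succ, sum_range_add, ih, sum_range_succ, mul_add, ← pow_mul]
    congr 1
    rw [sum_mul]
    exact sum_congr rfl fun i _ => by rw [pow_add, mul_comm]

variable {p g : ℕ} {w : R}

theorem sum_range_id_of_odd (hp : Odd p) : ∑ i ∈ range p, i = p * (p / 2) := by
  obtain ⟨m, rfl⟩ := hp
  have := sum_range_id_mul_two (2 * m + 1)
  rw [show (2 * m + 1) / 2 = m by omega]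
  rw [show 2 * m + 1 - 1 = 2 * m by omega] at this
  nlinarith

theorem pow_succ_dvd_geom_sum_sub (hp : Odd p) (hg : 1 ≤ g) (hw : (p : R) ^ g ∣ w - 1) :
    (p : R) ^ (g + 1) ∣ ∑ i ∈ range p, w ^ i - p := by
  obtain ⟨c, hc⟩ := hw
  set y := (p : R) ^ g * c
  have hsq : (p : R) ^ (g + 1) ∣ y ^ 2 :=
    (pow_dvd_pow (p : R) (show g + 1 ≤ g * 2 by omega)).trans ⟨c ^ 2, by ring⟩
  have hgauss : ∑ i ∈ range p, (i : R) = p * (p / 2 : ℕ) := by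
    rw [← Nat.cast_sum, sum_range_id_of_odd hp, Nat.cast_mul]
  -- modulo `y ^ 2`, the power `(1 + y) ^ i` is `1 + i * y`
  have hsplit : ∑ i ∈ range p, w ^ i - p =
      ∑ i ∈ range p, ((1 + y) ^ i - 1 ^ (i - 1) * y * i - 1 ^ i) +
        (p : R) ^ (g + 1) * ((p / 2 : ℕ) * c) := by
    rw [show w = 1 + y by linear_combination hc]
    simp only [one_pow, mul_one, one_mul, sum_sub_distrib, sum_const, card_range, nsmul_eq_mul,
      ← mul_sum, hgauss]
    ring
  rw [hsplit]
  exact dvd_add (dvd_sum fun i _ => hsq.trans (sq_dvd_add_pow_sub_sub y 1 i)) (dvd_mul_right _ _)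

theorem pow_succ_dvd_pow_sub_one (hp : Odd p) (hg : 1 ≤ g) (hw : (p : R) ^ g ∣ w - 1) :
    (p : R) ^ (g + 1) ∣ w ^ p - 1 := by
  obtain ⟨t, ht⟩ := pow_succ_dvd_geom_sum_sub hp hg hw
  rw [← geom_sum_mul, pow_succ']
  exact mul_dvd_mul ⟨1 + (p : R) ^ g * t, by linear_combination ht⟩ hw

theorem pow_add_dvd_geom_sum_sub (hp : Odd p) (hg : 1 ≤ g) (hw : (p : R) ^ g ∣ w - 1) (k : ℕ) :
    (p : R) ^ (g + k) ∣ ∑ i ∈ range (p ^ k), w ^ i - (p : R) ^ k := by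
  induction k generalizing g w with
  | zero => simp
  | succ k ih =>
    obtain ⟨s, hs⟩ := pow_succ_dvd_geom_sum_sub hp hg hw
    obtain ⟨t, ht⟩ := ih (by omega) (pow_succ_dvd_pow_sub_one hp hg hw)
    rw [pow_succ', geom_sum_range_mul]
    refine ⟨p * t + s + (p : R) ^ (g + 1) * s * t, ?_⟩
    linear_combination (∑ j ∈ range (p ^ k), (w ^ p) ^ j) * hs + (p + (p : R) ^ (g + 1) * s) * ht

end GeomSum

section OneAddPow

variable {p d f : ℕ}

theorem natCast_pow_self_eq_zero (p d : ℕ) : (p : ZMod (p ^ d)) ^ d = 0 := by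
  rw [← Nat.cast_pow, ZMod.natCast_self]

-- lifting the exponent: the valuation of `(1 + p ^ f) ^ n - 1` is `f + v_p(n)`
theorem one_add_pow_pow_eq_one_iff [hp : Fact p.Prime] (hodd : Odd p) (hf : 0 < f) (n : ℕ) :
    (1 + (p : ZMod (p ^ d)) ^ f) ^ n = 1 ↔ p ^ (d - f) ∣ n := by
  have hcast : (1 + (p : ZMod (p ^ d)) ^ f) ^ n = ((1 + p ^ f) ^ n : ℕ) := by push_cast; rfl
  rw [hcast, ← Nat.cast_one (R := ZMod (p ^ d)), ZMod.natCast_eq_natCast_iff, Nat.ModEq.comm,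
    Nat.modEq_iff_dvd' (Nat.one_le_pow _ _ (by positivity))]
  rcases eq_or_ne n 0 with rfl | hn
  · simp
  have hp1 : 1 < 1 + p ^ f := Nat.lt_add_of_pos_right (pow_pos hp.out.pos f)
  have hndvd : ¬p ∣ 1 + p ^ f := fun h =>
    hp.out.one_lt.ne' (Nat.dvd_one.mp ((Nat.dvd_add_left (dvd_pow_self p hf.ne')).mp h))
  have hlte := padicValNat.pow_sub_pow hodd hp1 (by simp [hf.ne']) hndvd hn
  rw [one_pow, Nat.add_sub_cancel_left, padicValNat.prime_pow] at hlte
  rw [padicValNat_dvd_iff_le (Nat.sub_ne_zero_of_lt (Nat.one_lt_pow hn hp1)),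
    padicValNat_dvd_iff_le hn, hlte]
  omega

theorem pow_dvd_one_add_pow_pow_sub_one (p d f m : ℕ) :
    (p : ZMod (p ^ d)) ^ f ∣ (1 + (p : ZMod (p ^ d)) ^ f) ^ m - 1 := by
  simpa using sub_one_dvd_pow_sub_one (1 + (p : ZMod (p ^ d)) ^ f) m

theorem one_add_pow_pow_mul_pow_sub (hfd : f ≤ d) (m : ℕ) :
    (1 + (p : ZMod (p ^ d)) ^ f) ^ m * (p : ZMod (p ^ d)) ^ (d - f) =
      (p : ZMod (p ^ d)) ^ (d - f) := by
  obtain ⟨c, hc⟩ := pow_dvd_one_add_pow_pow_sub_one p d f m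
  have hzero : (p : ZMod (p ^ d)) ^ f * (p : ZMod (p ^ d)) ^ (d - f) = 0 := by
    rw [← pow_add, Nat.add_sub_cancel' hfd, natCast_pow_self_eq_zero]
  linear_combination (p : ZMod (p ^ d)) ^ (d - f) * hc + c * hzero

theorem geom_sum_one_add_pow_pow (hodd : Odd p) (hf : 0 < f) (hfd : f ≤ d) (m : ℕ) :
    ∑ i ∈ range (p ^ (d - f)), ((1 + (p : ZMod (p ^ d)) ^ f) ^ m) ^ i =
      (p : ZMod (p ^ d)) ^ (d - f) := by
  have h := pow_add_dvd_geom_sum_sub hodd hf (pow_dvd_one_add_pow_pow_sub_one p d f m) (d - f)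
  rwa [Nat.add_sub_cancel' hfd, natCast_pow_self_eq_zero, zero_dvd_iff, sub_eq_zero] at h

theorem one_add_pow_pow_pow_sub_eq_one (hodd : Odd p) (hf : 0 < f) (hfd : f ≤ d) :
    (1 + (p : ZMod (p ^ d)) ^ f) ^ p ^ (d - f) = 1 := by
  have h := geom_sum_mul (1 + (p : ZMod (p ^ d)) ^ f) (p ^ (d - f))
  rw [← pow_one (1 + (p : ZMod (p ^ d)) ^ f), geom_sum_one_add_pow_pow hodd hf hfd, pow_one,
    add_sub_cancel_left, ← pow_add, Nat.sub_add_cancel hfd, natCast_pow_self_eq_zero] at h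
  exact sub_eq_zero.mp h.symm

theorem natCast_mul_pow_eq_zero_iff (hp : 0 < p) (hfd : f ≤ d) (i : ℕ) :
    (i : ZMod (p ^ d)) * (p : ZMod (p ^ d)) ^ f = 0 ↔ p ^ (d - f) ∣ i := by
  have hsplit : p ^ d = p ^ (d - f) * p ^ f := by rw [← pow_add, Nat.sub_add_cancel hfd]
  rw [← Nat.cast_pow, ← Nat.cast_mul, ZMod.natCast_eq_zero_iff, hsplit,
    Nat.mul_dvd_mul_iff_right (pow_pos hp f)]

end OneAddPow

def IsNAbelian (G : Type*) [Group G] (n : ℕ) : Prop :=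
  ∀ x y : G, (x * y) ^ n = x ^ n * y ^ n

section Conj

variable {G : Type*} [Group G] {a b : G} {r : ℕ}

theorem pow_mul_pow_comm_of_conj (hab : b⁻¹ * a * b = a ^ r) (m n : ℕ) :
    a ^ m * b ^ n = b ^ n * a ^ (m * r ^ n) := by
  have hb : SemiconjBy b (a ^ r) a := by
    rw [SemiconjBy, ← hab]
    group
  have hconj : ∀ n : ℕ, SemiconjBy (b ^ n) (a ^ r ^ n) a := by
    intro n
    induction n with
    | zero => simp [SemiconjBy]
    | succ n ih =>
      rw [pow_succ b, pow_succ' r, pow_mul]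
      exact ih.mul_left (hb.pow_right _)
  rw [mul_comm m, pow_mul]
  exact ((hconj n).pow_right m).symm

theorem pow_mul_pow_mul_pow_mul_pow_of_conj (hab : b⁻¹ * a * b = a ^ r) (j i l k : ℕ) :
    b ^ j * a ^ i * (b ^ l * a ^ k) = b ^ (j + l) * a ^ (i * r ^ l + k) := by
  rw [mul_assoc, ← mul_assoc (a ^ i), pow_mul_pow_comm_of_conj hab, pow_add, pow_add]
  group

theorem pow_mul_pow_pow_of_conj (hab : b⁻¹ * a * b = a ^ r) (j i n : ℕ) :
    (b ^ j * a ^ i) ^ n = b ^ (j * n) * a ^ (i * ∑ t ∈ range n, (r ^ j) ^ t) := by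
  induction n with
  | zero => simp
  | succ n ih =>
    rw [pow_succ, ih, pow_mul_pow_mul_pow_mul_pow_of_conj hab, geom_sum_succ]
    ring_nf

theorem exists_eq_pow_mul_pow_of_conj (hab : b⁻¹ * a * b = a ^ r) (ha : IsOfFinOrder a)
    (hb : IsOfFinOrder b) (hgen : Subgroup.closure {a, b} = ⊤) (x : G) :
    ∃ j i : ℕ, x = b ^ j * a ^ i := by
  have hmul : ∀ y ∈ ({a, b} : Set G), ∀ n : ℕ, ∀ z : G, (∃ j i : ℕ, z = b ^ j * a ^ i) →
      ∃ j i : ℕ, y ^ n * z = b ^ j * a ^ i := by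
    rintro y (rfl | rfl) n z ⟨j, i, rfl⟩
    · exact ⟨j, n * r ^ j + i,
        by rw [← mul_assoc, pow_mul_pow_comm_of_conj hab, mul_assoc, ← pow_add]⟩
    · exact ⟨n + j, i, by rw [← mul_assoc, ← pow_add]⟩
  have hfin : ∀ y ∈ ({a, b} : Set G), IsOfFinOrder y := by
    rintro y (rfl | rfl) <;> assumption
  have hx : x ∈ Subgroup.closure {a, b} := hgen ▸ Subgroup.mem_top x
  induction hx using Subgroup.closure_induction_left with
  | one => exact ⟨0, 0, by simp⟩
  | mul_left y hy z _ ih => simpa using hmul y hy 1 z ih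
  | inv_mul_cancel y hy z _ ih =>
    obtain ⟨n, hn⟩ :=
      (hfin y hy).mem_powers_iff_mem_zpowers.mpr (inv_mem (Subgroup.mem_zpowers y))
    rw [← hn]
    exact hmul y hy n z ih

theorem pow_mul_pow_commute_a_iff_of_conj (hab : b⁻¹ * a * b = a ^ r) (j i : ℕ) :
    Commute (b ^ j * a ^ i) a ↔ a ^ (i + 1) = a ^ (r ^ j + i) := by
  have h := pow_mul_pow_mul_pow_mul_pow_of_conj hab 0 1 j i
  rw [pow_zero, one_mul, pow_one, zero_add, one_mul] at h
  rw [Commute, SemiconjBy, h, mul_assoc, ← pow_succ, mul_right_inj]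

theorem pow_mul_pow_commute_b_iff_of_conj (hab : b⁻¹ * a * b = a ^ r) (j i : ℕ) :
    Commute (b ^ j * a ^ i) b ↔ a ^ (i * r) = a ^ i := by
  have h := pow_mul_pow_mul_pow_mul_pow_of_conj hab j i 1 0
  rw [pow_zero, mul_one, pow_one, pow_one, add_zero] at h
  rw [Commute, SemiconjBy, h, ← mul_assoc, ← pow_succ', mul_right_inj]

theorem isNAbelian_of_conj {p d f : ℕ} (hodd : Odd p) (hf : 0 < f) (hfd : f ≤ d)
    (hab : b⁻¹ * a * b = a ^ (1 + p ^ f)) (ha : a ^ p ^ d = 1) (hb : IsOfFinOrder b)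
    (hgen : Subgroup.closure {a, b} = ⊤) :
    IsNAbelian G (p ^ (d - f)) := by
  have hpow : ∀ m n : ℕ, (m : ZMod (p ^ d)) = n → a ^ m = a ^ n := fun m n h =>
    pow_eq_pow_of_modEq ((ZMod.natCast_eq_natCast_iff _ _ _).mp h) ha
  have hq : ∀ j i : ℕ,
      (b ^ j * a ^ i) ^ p ^ (d - f) = b ^ (j * p ^ (d - f)) * a ^ (i * p ^ (d - f)) := by
    intro j i
    rw [pow_mul_pow_pow_of_conj hab]
    congr 1
    apply hpow
    push_cast
    rw [geom_sum_one_add_pow_pow hodd hf hfd]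
  have hfin : IsOfFinOrder a := isOfFinOrder_iff_pow_eq_one.mpr ⟨p ^ d, pow_pos hodd.pos d, ha⟩
  intro x y
  obtain ⟨j, i, rfl⟩ := exists_eq_pow_mul_pow_of_conj hab hfin hb hgen x
  obtain ⟨l, k, rfl⟩ := exists_eq_pow_mul_pow_of_conj hab hfin hb hgen y
  rw [pow_mul_pow_mul_pow_mul_pow_of_conj hab, hq, hq, hq,
    pow_mul_pow_mul_pow_mul_pow_of_conj hab, add_mul]
  congr 1
  apply hpow
  push_cast
  rw [pow_mul', one_add_pow_pow_pow_sub_eq_one hodd hf hfd, one_pow]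
  linear_combination (i : ZMod (p ^ d)) * one_add_pow_pow_mul_pow_sub hfd l

end Conj

section M2

variable {p d e f : ℕ}

theorem M2a_pow_eq_one : M2a p d e f ^ p ^ d = 1 := by
  rw [M2a, PresentedGroup.of, ← map_pow]
  exact PresentedGroup.one_of_mem (by simp [M2rels])

theorem M2b_pow_eq_one : M2b p d e f ^ p ^ e = 1 := by
  rw [M2b, PresentedGroup.of, ← map_pow]
  exact PresentedGroup.one_of_mem (by simp [M2rels])

theorem M2b_inv_mul_M2a_mul_M2b :
    (M2b p d e f)⁻¹ * M2a p d e f * M2b p d e f = M2a p d e f ^ (1 + p ^ f) := by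
  simp only [M2a, M2b, PresentedGroup.of, ← map_inv, ← map_mul, ← map_pow]
  exact PresentedGroup.mk_eq_mk_of_mul_inv_mem (by simp [M2rels])

theorem closure_M2a_M2b : Subgroup.closure {M2a p d e f, M2b p d e f} = ⊤ := by
  rw [← PresentedGroup.closure_range_of]
  congr
  ext
  simp [Fin.exists_fin_two, M2a, M2b, eq_comm]

theorem isOfFinOrder_M2a (hp : 0 < p) : IsOfFinOrder (M2a p d e f) :=
  isOfFinOrder_iff_pow_eq_one.mpr ⟨_, pow_pos hp d, M2a_pow_eq_one⟩

theorem isOfFinOrder_M2b (hp : 0 < p) : IsOfFinOrder (M2b p d e f) :=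
  isOfFinOrder_iff_pow_eq_one.mpr ⟨_, pow_pos hp e, M2b_pow_eq_one⟩

noncomputable def M2.toPerm [Fact p.Prime] (hodd : Odd p) (hf : 0 < f) (hde : d - f ≤ e) :
    M2 p d e f →* Equiv.Perm (ZMod (p ^ d)) :=
  let u := Units.ofPowEqOne (1 + (p : ZMod (p ^ d)) ^ f) (p ^ e)
    ((one_add_pow_pow_eq_one_iff hodd hf _).mpr (Nat.pow_dvd_pow p hde))
    (pow_ne_zero _ (Fact.out : p.Prime).ne_zero)
  PresentedGroup.toGroup (f := ![Equiv.addRight 1, MulAction.toPermHom _ _ u⁻¹]) <| by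
    intro r hr
    simp only [M2rels, Set.mem_insert_iff, Set.mem_singleton_iff] at hr
    rcases hr with rfl | rfl | rfl
    · ext x
      simp
    · rw [map_pow, FreeGroup.lift_apply_of]
      change (MulAction.toPermHom _ _ u⁻¹) ^ p ^ e = 1
      rw [← map_pow, inv_pow, Units.pow_ofPowEqOne, inv_one, map_one]
    · simp only [map_mul, map_inv, map_pow, FreeGroup.lift_apply_of, mul_inv_eq_one]
      ext x
      simp only [Matrix.cons_val_zero, Matrix.cons_val_one, Matrix.cons_val_fin_one,
        MulAction.toPermHom_apply, inv_inv, Equiv.Perm.coe_mul, Function.comp_apply,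
        Equiv.coe_addRight, Equiv.Perm.coe_inv, MulAction.toPerm_symm_apply, MulAction.toPerm_apply,
        Units.smul_def, smul_eq_mul, smul_add, Units.mul_inv_cancel_left, mul_one,
        Equiv.nsmul_addRight, nsmul_eq_mul, Nat.cast_add, Nat.cast_one, Nat.cast_pow,
        Equiv.addRight_add, add_assoc, add_right_inj]
      rfl

theorem M2.toPerm_M2a [Fact p.Prime] (hodd : Odd p) (hf : 0 < f) (hde : d - f ≤ e) :
    M2.toPerm hodd hf hde (M2a p d e f) = Equiv.addRight 1 := by
  rw [M2.toPerm, M2a, PresentedGroup.toGroup.of]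
  rfl

theorem orderOf_M2a [Fact p.Prime] (hodd : Odd p) (hf : 0 < f) (hde : d - f ≤ e) :
    orderOf (M2a p d e f) = p ^ d := by
  refine Nat.dvd_antisymm (orderOf_dvd_of_pow_eq_one M2a_pow_eq_one) ?_
  have h := congrArg (M2.toPerm hodd hf hde) (pow_orderOf_eq_one (M2a p d e f))
  rw [map_pow, map_one, M2.toPerm_M2a, Equiv.nsmul_addRight, nsmul_eq_mul, mul_one] at h
  simpa [← ZMod.natCast_eq_zero_iff] using congrArg (· 0) h

theorem M2b_pow_mul_M2a_pow_mem_center_iff [hp : Fact p.Prime] (hodd : Odd p) (hf : 0 < f)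
    (hfd : f ≤ d) (hde : d - f ≤ e) (j i : ℕ) :
    M2b p d e f ^ j * M2a p d e f ^ i ∈ Subgroup.center (M2 p d e f) ↔
      p ^ (d - f) ∣ j ∧ p ^ (d - f) ∣ i := by
  have hpow : ∀ m n : ℕ, M2a p d e f ^ m = M2a p d e f ^ n ↔ (m : ZMod (p ^ d)) = n := by
    intro m n
    rw [pow_eq_pow_iff_modEq, orderOf_M2a hodd hf hde, ZMod.natCast_eq_natCast_iff]
  rw [Subgroup.center_eq_iInf closure_M2a_M2b]
  simp only [Subgroup.mem_iInf, Set.forall_mem_insert, Set.mem_singleton_iff, forall_eq,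
    Subgroup.mem_centralizer_singleton_iff]
  have hab := M2b_inv_mul_M2a_mul_M2b (p := p) (d := d) (e := e) (f := f)
  rw [← commute_iff_eq, ← commute_iff_eq, Commute.symm_iff, Commute.symm_iff,
    pow_mul_pow_commute_a_iff_of_conj hab, pow_mul_pow_commute_b_iff_of_conj hab, hpow, hpow,
    ← one_add_pow_pow_eq_one_iff hodd hf j, ← natCast_mul_pow_eq_zero_iff hp.out.pos hfd i]
  push_cast
  rw [add_comm _ 1, add_left_inj, eq_comm, mul_add, mul_one, add_eq_left]

theorem center_M2_eq_closure [hp : Fact p.Prime] (hodd : Odd p) (hf : 0 < f) (hfd : f ≤ d)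
    (hde : d - f ≤ e) :
    Subgroup.center (M2 p d e f) =
      Subgroup.closure {M2a p d e f ^ p ^ (d - f), M2b p d e f ^ p ^ (d - f)} := by
  refine le_antisymm (fun z hz => ?_) ((Subgroup.closure_le _).mpr ?_)
  · obtain ⟨j, i, rfl⟩ := exists_eq_pow_mul_pow_of_conj M2b_inv_mul_M2a_mul_M2b
      (isOfFinOrder_M2a hp.out.pos) (isOfFinOrder_M2b hp.out.pos) closure_M2a_M2b z
    obtain ⟨⟨j, rfl⟩, ⟨i, rfl⟩⟩ := (M2b_pow_mul_M2a_pow_mem_center_iff hodd hf hfd hde _ _).mp hz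
    rw [pow_mul, pow_mul]
    exact Subgroup.mul_mem _ (Subgroup.pow_mem _ (Subgroup.subset_closure (by simp)) _)
      (Subgroup.pow_mem _ (Subgroup.subset_closure (by simp)) _)
  · rintro _ (rfl | rfl)
    · simpa using
        (M2b_pow_mul_M2a_pow_mem_center_iff hodd hf hfd hde 0 _).mpr ⟨dvd_zero _, dvd_rfl⟩
    · simpa using
        (M2b_pow_mul_M2a_pow_mem_center_iff hodd hf hfd hde _ 0).mpr ⟨dvd_rfl, dvd_zero _⟩

end M2

/-- For an odd prime `p` and positive `d, e, f` with `f < d < e`, the group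
`G = M₂(p,d,e,f)` is `p^(d-f)`-abelian and its center is generated by `a^(p^(d-f))` and
`b^(p^(d-f))`. -/
theorem stmt_5 (p d e f : ℕ) (hp : p.Prime) (hodd : Odd p)
    (hf : 0 < f) (hfd : f < d) (hde : d < e) :
    (∀ x y : M2 p d e f, (x * y) ^ p ^ (d - f) = x ^ p ^ (d - f) * y ^ p ^ (d - f)) ∧
    Subgroup.center (M2 p d e f) =
      Subgroup.closure {M2a p d e f ^ p ^ (d - f), M2b p d e f ^ p ^ (d - f)} := by
  have := Fact.mk hp
  exact ⟨isNAbelian_of_conj hodd hf hfd.le M2b_inv_mul_M2a_mul_M2b M2a_pow_eq_one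
    (isOfFinOrder_M2b hp.pos) closure_M2a_M2b, center_M2_eq_closure hodd hf hfd.le (by omega)⟩
end

section
/- Let p be an odd prime, let d, e, f be positive integers with either 1 ≤ d ≤ f ≤ e ≤ d+f or 1 ≤ f < d < e ≤ d+f, and let G = M₁(p,d,e,f) with canonical generators a, b. For integers i, j, k, l, set α = bⁱaʲ and β = bᵏaˡ. If d = e, then (α, β) is an exact (p^d, p^e)-bicyclic pair of G if and only if il − jk ≢ 0 (mod p). If d < e, then (α, β) is an exact (p^d, p^e)-bicyclic pair of G if and only if p^{e−d} ∣ j and p ∤ il. -/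
/-!
`M₁(p,d,e,f)` is the split metacyclic group `ℤ/p^e ⋊ ℤ/p^d` in which `b` acts by multiplication
by `w = 1 + p^f`; this needs `w^(p^d) ≡ 1 (mod p^e)`, which holds because `e ≤ d + f`.
Since `w ≡ 1 (mod p)` and `p` is odd, the `p^m`-th power of `(x, y)` is `(p^m x u, p^m y)` for a
unit `u`, which gives the orders of `α = bⁱaʲ` and `β = bᵏaˡ`. In a group of order `p^d p^e`,
elements of orders `p^d` and `p^e` form an exact bicyclic pair as soon as `⟨α⟩ ∩ ⟨β⟩ = 1`, and
two cyclic `p`-groups meet trivially iff their subgroups of order `p`, generated by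
`α^(p^(d-1))` and `β^(p^(e-1))`, differ. Elements `(x, y)` with `p x = 0` are fixed by the
action and their powers are computed coordinatewise, so comparing these two subgroups is linear
algebra over `ℤ/p`: for `d = e` it amounts to `il - jk ≢ 0`, and for `d < e` to `p ∤ i`.
-/

open Finset Subgroup

theorem geom_sum_one_add_prime_mul {R : Type*} [CommRing R] {p : ℕ} (hp : Odd p) (z : R) :
    ∃ t : R, ∑ i ∈ range p, (1 + p * z) ^ i = p * (1 + p * t) := by
  obtain ⟨t, ht⟩ := odd_sq_dvd_geom_sum₂_sub (1 : R) z hp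
  simp only [one_pow, mul_one] at ht
  exact ⟨t, by linear_combination ht⟩

theorem one_add_prime_pow_pow_eq_one {p d e f : ℕ} (hp : p.Prime) (hodd : Odd p) (hf : 1 ≤ f)
    (he : e ≤ d + f) : (1 + (p : ZMod (p ^ e)) ^ f) ^ p ^ d = 1 := by
  have hfp : f + 2 ≤ f * p := by
    obtain ⟨k, rfl⟩ := hodd
    have : 1 ≤ k := by have := hp.two_le; omega
    nlinarith
  obtain ⟨y, hy⟩ := ZMod.exists_one_add_mul_pow_prime_pow_eq (u := (p : ZMod (p ^ e)) ^ f)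
    (v := p) hp (dvd_pow_self _ (by omega))
    (by rw [← pow_mul, ← pow_succ', ← pow_succ]; exact pow_dvd_pow _ hfp) 1 d
  have hzero : (p : ZMod (p ^ e)) ^ d * p ^ f = 0 := by
    rw [← pow_add, ← Nat.cast_pow, ZMod.natCast_eq_zero_iff]
    exact pow_dvd_pow _ he
  rw [mul_one] at hy
  rw [hy, hzero, zero_mul, add_zero]

theorem natCast_pow_mul_intCast_eq_zero_iff {p : ℕ} (hp : p ≠ 0) (e m : ℕ) (j : ℤ) :
    (p : ZMod (p ^ e)) ^ m * j = 0 ↔ (p : ℤ) ^ (e - m) ∣ j := by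
  rw [← Int.cast_natCast, ← Int.cast_pow, ← Int.cast_mul, ZMod.intCast_zmod_eq_zero_iff_dvd,
    Nat.cast_pow]
  rcases le_total m e with h | h
  · obtain ⟨k, rfl⟩ := Nat.exists_eq_add_of_le h
    rw [pow_add, Nat.add_sub_cancel_left,
      mul_dvd_mul_iff_left (pow_ne_zero _ (by exact_mod_cast hp))]
  · rw [Nat.sub_eq_zero_of_le h, pow_zero]
    exact iff_of_true (dvd_mul_of_dvd_left (pow_dvd_pow _ h) _) (one_dvd _)

theorem natCast_pow_pred_mul_eq_iff {p m : ℕ} (hp : p ≠ 0) (hm : m ≠ 0) (X Y : ℤ) (c : ℕ) :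
    (p : ZMod (p ^ m)) ^ (m - 1) * X = c * ((p : ZMod (p ^ m)) ^ (m - 1) * Y) ↔
      (X : ZMod p) = c * Y := by
  have hsub : (p : ZMod (p ^ m)) ^ (m - 1) * X - c * ((p : ZMod (p ^ m)) ^ (m - 1) * Y) =
      (p : ZMod (p ^ m)) ^ (m - 1) * ((X - c * Y : ℤ) : ZMod (p ^ m)) := by
    push_cast; ring
  rw [← sub_eq_zero, hsub, natCast_pow_mul_intCast_eq_zero_iff hp, Nat.sub_sub_self (by omega),
    pow_one, ← ZMod.intCast_zmod_eq_zero_iff_dvd]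
  push_cast
  exact sub_eq_zero

theorem mul_sub_mul_ne_zero_iff {K : Type*} [Field K] (a b c d : K) :
    b * c - a * d ≠ 0 ↔
      ¬(a = 0 ∧ b = 0) ∧ ¬(c = 0 ∧ d = 0) ∧ ¬∃ t, a = t * c ∧ b = t * d := by
  constructor
  · intro h
    refine ⟨?_, ?_, ?_⟩
    · rintro ⟨rfl, rfl⟩; simp at h
    · rintro ⟨rfl, rfl⟩; simp at h
    · rintro ⟨t, rfl, rfl⟩; exact h (by ring)
  · rintro ⟨hab, hcd, hprop⟩ h
    rw [sub_eq_zero] at h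
    by_cases hc : c = 0
    · have hd : d ≠ 0 := fun hd => hcd ⟨hc, hd⟩
      have ha : a = 0 := by simpa [hc, hd] using h.symm
      exact hprop ⟨b / d, by simp [ha, hc], by field_simp⟩
    · exact hprop ⟨a / c, by field_simp, by field_simp; linear_combination h⟩

theorem pow_mul_pow_eq_of_inv_mul_mul_eq {G : Type*} [Group G] {a b : G} {k : ℕ}
    (h : b⁻¹ * a * b = a ^ k) (n m : ℕ) : a ^ n * b ^ m = b ^ m * a ^ (n * k ^ m) := by
  have hab : a * b = b * a ^ k := by rw [← h]; group
  have h1 (n : ℕ) : a ^ n * b = b * a ^ (n * k) := by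
    induction n with
    | zero => simp
    | succ n ih => rw [pow_succ, mul_assoc, hab, ← mul_assoc, ih, mul_assoc, ← pow_add]; ring_nf
  induction m with
  | zero => simp
  | succ m ih =>
    rw [pow_succ, ← mul_assoc, ih, mul_assoc, h1, ← mul_assoc, ← pow_succ, pow_succ k, mul_assoc n]

theorem isExactBicyclicPair_iff_of_card_eq {G : Type*} [Group G] [Finite G] {m n : ℕ}
    (hG : Nat.card G = m * n) {α β : G} :
    IsExactBicyclicPair m n α β ↔
      orderOf α = m ∧ orderOf β = n ∧ zpowers α ⊓ zpowers β = ⊥ := by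
  refine ⟨fun ⟨hα, hβ, h, _⟩ => ⟨hα, hβ, h⟩, fun ⟨hα, hβ, h⟩ => ⟨hα, hβ, h, fun g => ?_⟩⟩
  have hc : IsComplement' (zpowers α) (zpowers β) :=
    isComplement'_of_card_mul_and_disjoint
      (by rw [Nat.card_zpowers, Nat.card_zpowers, hα, hβ, hG]) (disjoint_iff.mpr h)
  obtain ⟨⟨⟨_, hx⟩, ⟨_, hy⟩⟩, rfl⟩ := hc.2 g
  obtain ⟨s, rfl⟩ := mem_zpowers_iff.mp hx
  obtain ⟨t, rfl⟩ := mem_zpowers_iff.mp hy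
  exact ⟨s, t, rfl⟩

theorem isExactBicyclicPair_map_iff {G H : Type*} [Group G] [Group H] (φ : G ≃* H) {m n : ℕ}
    {α β : G} : IsExactBicyclicPair m n (φ α) (φ β) ↔ IsExactBicyclicPair m n α β := by
  have hinf : zpowers (φ α) ⊓ zpowers (φ β) = (zpowers α ⊓ zpowers β).map φ.toMonoidHom := by
    rw [map_inf_eq _ _ _ φ.injective, MonoidHom.map_zpowers, MonoidHom.map_zpowers]
    rfl
  have hcover : (∀ g : H, ∃ s t : ℤ, g = φ α ^ s * φ β ^ t) ↔
      ∀ g : G, ∃ s t : ℤ, g = α ^ s * β ^ t := by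
    simp only [φ.surjective.forall, ← map_zpow, ← map_mul, φ.injective.eq_iff]
  simp only [IsExactBicyclicPair, MulEquiv.orderOf_eq, hinf, hcover,
    map_eq_bot_iff_of_injective _ (f := φ.toMonoidHom) φ.injective]

section PrimePowerOrder

variable {G : Type*} [Group G] {p : ℕ} [hp : Fact p.Prime]

theorem pow_prime_pow_pred_ne_one {α : G} {m : ℕ} (hm : m ≠ 0) (hα : orderOf α = p ^ m) :
    α ^ p ^ (m - 1) ≠ 1 :=
  pow_ne_one_of_lt_orderOf (pow_ne_zero _ hp.out.ne_zero)
    (hα ▸ Nat.pow_lt_pow_right hp.out.one_lt (by omega))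

theorem orderOf_eq_prime_pow_iff {x : G} {m : ℕ} (hm : m ≠ 0) :
    orderOf x = p ^ m ↔ x ^ p ^ m = 1 ∧ x ^ p ^ (m - 1) ≠ 1 := by
  refine ⟨fun h => ⟨h ▸ pow_orderOf_eq_one x, pow_prime_pow_pred_ne_one hm h⟩, fun ⟨h1, h2⟩ => ?_⟩
  obtain ⟨k, rfl⟩ := Nat.exists_eq_succ_of_ne_zero hm
  exact orderOf_eq_prime_pow h2 h1

theorem mem_zpowers_pow_prime_pow_of_pow_eq_one {α x : G} {m : ℕ} (hα : orderOf α = p ^ m)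
    (hx : x ∈ zpowers α) (hxp : x ^ p = 1) : x ∈ zpowers (α ^ p ^ (m - 1)) := by
  obtain ⟨s, rfl⟩ := mem_zpowers_iff.mp hx
  rcases Nat.eq_zero_or_pos m with rfl | hm
  · simp_all
  have hdvd : (p : ℤ) ^ (m - 1) * p ∣ s * p := by
    rw [← pow_succ, Nat.sub_add_cancel hm, ← Nat.cast_pow, ← hα]
    exact orderOf_dvd_iff_zpow_eq_one.mpr (by rw [zpow_mul, zpow_natCast, hxp])
  obtain ⟨t, rfl⟩ := (mul_dvd_mul_iff_right (by exact_mod_cast hp.out.ne_zero)).mp hdvd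
  exact mem_zpowers_iff.mpr ⟨t, by rw [← zpow_natCast, ← zpow_mul]; push_cast; rfl⟩

theorem mem_zpowers_of_orderOf_eq_prime {a y : G} (ha : orderOf a = p) (hy : y ∈ zpowers a)
    (hy1 : y ≠ 1) : a ∈ zpowers y := by
  obtain ⟨s, rfl⟩ := mem_zpowers_iff.mp hy
  have hs : ¬(p : ℤ) ∣ s := fun hs => hy1 (orderOf_dvd_iff_zpow_eq_one.mp (ha ▸ hs))
  rw [mem_zpowers_zpow_iff, ha, Int.gcd_comm, ← Int.isCoprime_iff_gcd_eq_one]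
  exact (Prime.coprime_iff_not_dvd (Nat.prime_iff_prime_int.mp hp.out)).mpr hs

theorem exists_pow_prime_pow_ne_one {x : G} {m : ℕ} (hx : orderOf x ∣ p ^ m) (hx1 : x ≠ 1) :
    ∃ r : ℕ, (x ^ p ^ r) ^ p = 1 ∧ x ^ p ^ r ≠ 1 := by
  obtain ⟨r, -, hr⟩ := (Nat.dvd_prime_pow hp.out).mp hx
  have hr0 : r ≠ 0 := by rintro rfl; exact hx1 (orderOf_eq_one_iff.mp (by simpa using hr))
  refine ⟨r - 1, ?_, pow_prime_pow_pred_ne_one hr0 hr⟩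
  rw [← pow_mul, ← pow_succ, Nat.sub_add_cancel (Nat.pos_of_ne_zero hr0), ← hr, pow_orderOf_eq_one]

theorem inf_zpowers_eq_bot_iff {α β : G} {m n : ℕ} (hm : m ≠ 0)
    (hα : orderOf α = p ^ m) (hβ : orderOf β = p ^ n) :
    zpowers α ⊓ zpowers β = ⊥ ↔ α ^ p ^ (m - 1) ∉ zpowers (β ^ p ^ (n - 1)) := by
  constructor
  · intro h hmem
    have hβ' : zpowers (β ^ p ^ (n - 1)) ≤ zpowers β := zpowers_le.mpr (pow_mem (mem_zpowers β) _)
    have : α ^ p ^ (m - 1) ∈ zpowers α ⊓ zpowers β := ⟨pow_mem (mem_zpowers α) _, hβ' hmem⟩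
    rw [h, mem_bot] at this
    exact pow_prime_pow_pred_ne_one hm hα this
  · intro h
    rw [eq_bot_iff_forall]
    by_contra! hx
    obtain ⟨x, ⟨hxα, hxβ⟩, hx1⟩ := hx
    obtain ⟨r, hyp, hy1⟩ := exists_pow_prime_pow_ne_one (hα ▸ orderOf_dvd_of_mem_zpowers hxα) hx1
    have hyα := mem_zpowers_pow_prime_pow_of_pow_eq_one hα (pow_mem hxα _) hyp
    have hyβ := mem_zpowers_pow_prime_pow_of_pow_eq_one hβ (pow_mem hxβ _) hyp
    have hα' : orderOf (α ^ p ^ (m - 1)) = p := by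
      rw [orderOf_pow_of_dvd (pow_ne_zero _ hp.out.ne_zero) (hα ▸ pow_dvd_pow _ (by omega)), hα,
        Nat.pow_div (by omega) hp.out.pos, Nat.sub_sub_self (by omega), pow_one]
    exact h (zpowers_le.mpr hyβ (mem_zpowers_of_orderOf_eq_prime hα' hyα hy1))

end PrimePowerOrder

/-- `⟨x, y⟩` stands for `b^y a^x` in `ℤ/N ⋊ ℤ/n`, where `b⁻¹ a b = a^w`. -/
@[ext]
structure MetacyclicModel (N n : ℕ) (w : ZMod N) where
  x : ZMod N
  y : ZMod n

namespace MetacyclicModel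

section Basic

variable {N n : ℕ} {w : ZMod N}

instance : One (MetacyclicModel N n w) := ⟨⟨0, 0⟩⟩
instance : Mul (MetacyclicModel N n w) := ⟨fun g h => ⟨g.x * w ^ h.y.val + h.x, g.y + h.y⟩⟩
instance : Inv (MetacyclicModel N n w) := ⟨fun g => ⟨-(g.x * w ^ (-g.y).val), -g.y⟩⟩

@[simp] lemma one_x : (1 : MetacyclicModel N n w).x = 0 := rfl
@[simp] lemma one_y : (1 : MetacyclicModel N n w).y = 0 := rfl
@[simp] lemma mul_x (g h : MetacyclicModel N n w) : (g * h).x = g.x * w ^ h.y.val + h.x := rfl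
@[simp] lemma mul_y (g h : MetacyclicModel N n w) : (g * h).y = g.y + h.y := rfl
@[simp] lemma inv_x (g : MetacyclicModel N n w) : g⁻¹.x = -(g.x * w ^ (-g.y).val) := rfl
@[simp] lemma inv_y (g : MetacyclicModel N n w) : g⁻¹.y = -g.y := rfl

lemma mk_zero_mul_mk_zero (x : ZMod N) (y : ZMod n) :
    (⟨0, y⟩ * ⟨x, 0⟩ : MetacyclicModel N n w) = ⟨x, y⟩ := by
  ext <;> simp

instance [NeZero N] [NeZero n] : Finite (MetacyclicModel N n w) :=
  .of_injective (fun g => (g.x, g.y)) fun g h hgh => by simpa [MetacyclicModel.ext_iff] using hgh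

lemma card_eq : Nat.card (MetacyclicModel N n w) = N * n := by
  rw [Nat.card_congr ⟨fun g => (g.x, g.y), fun z => ⟨z.1, z.2⟩, fun _ => rfl, fun _ => rfl⟩,
    Nat.card_prod, Nat.card_zmod, Nat.card_zmod]

variable [hw : Fact (w ^ n = 1)]

lemma pow_val_one : w ^ (1 : ZMod n).val = w := by
  rw [ZMod.val_one_eq_one_mod, ← pow_eq_pow_mod _ hw.out, pow_one]

variable [NeZero n]

lemma pow_val_add (y y' : ZMod n) : w ^ (y + y').val = w ^ y.val * w ^ y'.val := by
  rw [ZMod.val_add, ← pow_eq_pow_mod _ hw.out, pow_add]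

instance : Group (MetacyclicModel N n w) where
  mul_assoc g h k := by ext <;> simp only [mul_x, mul_y, pow_val_add] <;> ring
  one_mul g := by ext <;> simp
  mul_one g := by ext <;> simp
  inv_mul_cancel g := by
    ext
    · rw [mul_x, inv_x, neg_mul, mul_assoc, ← pow_val_add, neg_add_cancel, ZMod.val_zero,
        pow_zero, mul_one, neg_add_cancel, one_x]
    · simp

lemma pow_eq (g : MetacyclicModel N n w) (k : ℕ) :
    g ^ k = ⟨g.x * ∑ t ∈ range k, (w ^ g.y.val) ^ t, k * g.y⟩ := by
  induction k with
  | zero => ext <;> simp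
  | succ k ih =>
    ext <;> simp only [pow_succ, ih, mul_x, mul_y, geom_sum_succ] <;> push_cast <;> ring

lemma mk_one_zero_zpow (j : ℤ) : (⟨1, 0⟩ : MetacyclicModel N n w) ^ j = ⟨j, 0⟩ := by
  induction j using Int.induction_on with
  | zero => ext <;> simp
  | succ j ih => rw [zpow_add_one, ih]; ext <;> simp
  | pred j ih => rw [zpow_sub_one, ih]; ext <;> simp [sub_eq_add_neg]

lemma mk_zero_one_zpow (i : ℤ) : (⟨0, 1⟩ : MetacyclicModel N n w) ^ i = ⟨0, i⟩ := by
  induction i using Int.induction_on with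
  | zero => ext <;> simp
  | succ i ih => rw [zpow_add_one, ih]; ext <;> simp
  | pred i ih => rw [zpow_sub_one, ih]; ext <;> simp [sub_eq_add_neg]

lemma mk_one_zero_pow (k : ℕ) : (⟨1, 0⟩ : MetacyclicModel N n w) ^ k = ⟨k, 0⟩ := by
  rw [← zpow_natCast, mk_one_zero_zpow, Int.cast_natCast]

lemma mk_zero_one_pow (k : ℕ) : (⟨0, 1⟩ : MetacyclicModel N n w) ^ k = ⟨0, k⟩ := by
  rw [← zpow_natCast, mk_zero_one_zpow, Int.cast_natCast]

variable {p : ℕ}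

lemma exists_pow_prime_eq (hodd : Odd p) (hw1 : (p : ZMod N) ∣ w - 1)
    (g : MetacyclicModel N n w) : ∃ t : ZMod N, g ^ p = ⟨p * g.x * (1 + p * t), p * g.y⟩ := by
  obtain ⟨z, hz⟩ := hw1.trans (sub_one_dvd_pow_sub_one w g.y.val)
  obtain ⟨t, ht⟩ := geom_sum_one_add_prime_mul hodd z
  refine ⟨t, ?_⟩
  rw [pow_eq, show w ^ g.y.val = 1 + p * z by linear_combination hz, ht]
  ext <;> ring

lemma exists_pow_prime_pow_eq (hodd : Odd p) (hw1 : (p : ZMod N) ∣ w - 1)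
    (g : MetacyclicModel N n w) (m : ℕ) :
    ∃ t : ZMod N, g ^ p ^ m = ⟨p ^ m * g.x * (1 + p * t), p ^ m * g.y⟩ := by
  induction m with
  | zero => exact ⟨0, by ext <;> simp⟩
  | succ m ih =>
    obtain ⟨t, ht⟩ := ih
    obtain ⟨t', ht'⟩ := exists_pow_prime_eq hodd hw1 (g ^ p ^ m)
    refine ⟨t + t' + p * t * t', ?_⟩
    rw [pow_succ, pow_mul, ht', ht]
    ext <;> ring

lemma pow_eq_of_prime_mul_x_eq_zero (hw1 : (p : ZMod N) ∣ w - 1) {g : MetacyclicModel N n w}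
    (hg : p * g.x = 0) (k : ℕ) : g ^ k = ⟨k * g.x, k * g.y⟩ := by
  have hfix (t : ℕ) : g.x * (w ^ g.y.val) ^ t = g.x := by
    obtain ⟨z, hz⟩ := hw1.trans (sub_one_dvd_pow_sub_one w (g.y.val * t))
    rw [← pow_mul, show w ^ (g.y.val * t) = 1 + p * z by linear_combination hz]
    linear_combination z * hg
  rw [pow_eq, mul_sum]
  simp only [hfix, sum_const, card_range, nsmul_eq_mul, mul_comm]

end Basic

section PrimePower

variable {p e n : ℕ} {w : ZMod (p ^ e)} [NeZero n] [Fact (w ^ n = 1)]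

lemma pow_prime_pow_eq_one_iff (hodd : Odd p) (hw1 : (p : ZMod (p ^ e)) ∣ w - 1)
    (g : MetacyclicModel (p ^ e) n w) (m : ℕ) :
    g ^ p ^ m = 1 ↔ (p : ZMod (p ^ e)) ^ m * g.x = 0 ∧ (p : ZMod n) ^ m * g.y = 0 := by
  obtain ⟨t, ht⟩ := exists_pow_prime_pow_eq hodd hw1 g m
  have hunit : IsUnit (1 + p * t) := IsNilpotent.isUnit_one_add
    ⟨e, by rw [mul_pow, ← Nat.cast_pow, ZMod.natCast_self, zero_mul]⟩
  simp only [ht, MetacyclicModel.ext_iff, one_x, one_y, hunit.mul_left_eq_zero]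

lemma pow_prime_pow_eq_of_mul_x_eq_zero (hodd : Odd p) (hw1 : (p : ZMod (p ^ e)) ∣ w - 1)
    {g : MetacyclicModel (p ^ e) n w} {m : ℕ} (hg : (p : ZMod (p ^ e)) ^ (m + 1) * g.x = 0) :
    g ^ p ^ m = ⟨p ^ m * g.x, p ^ m * g.y⟩ := by
  obtain ⟨t, ht⟩ := exists_pow_prime_pow_eq hodd hw1 g m
  rw [ht]
  ext
  · linear_combination t * hg
  · push_cast; rfl

variable [Fact p.Prime]

lemma orderOf_eq_prime_pow_iff (hodd : Odd p) (hw1 : (p : ZMod (p ^ e)) ∣ w - 1)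
    (g : MetacyclicModel (p ^ e) n w) {m : ℕ} (hm : m ≠ 0) :
    orderOf g = p ^ m ↔ ((p : ZMod (p ^ e)) ^ m * g.x = 0 ∧ (p : ZMod n) ^ m * g.y = 0) ∧
      ¬((p : ZMod (p ^ e)) ^ (m - 1) * g.x = 0 ∧ (p : ZMod n) ^ (m - 1) * g.y = 0) := by
  simp only [_root_.orderOf_eq_prime_pow_iff hm, ne_eq, pow_prime_pow_eq_one_iff hodd hw1]

lemma mem_zpowers_iff_of_prime_mul_x_eq_zero (hw1 : (p : ZMod (p ^ e)) ∣ w - 1)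
    {g h : MetacyclicModel (p ^ e) n w} (hh : p * h.x = 0) :
    g ∈ zpowers h ↔ ∃ c : ℕ, g = ⟨c * h.x, c * h.y⟩ := by
  rw [← mem_powers_iff_mem_zpowers, Submonoid.mem_powers_iff]
  simp only [pow_eq_of_prime_mul_x_eq_zero hw1 hh, eq_comm]

lemma inf_zpowers_eq_bot_iff (hodd : Odd p) (hw1 : (p : ZMod (p ^ e)) ∣ w - 1)
    {g h : MetacyclicModel (p ^ e) n w} {m m' : ℕ} (hm : m ≠ 0) (hm' : m' ≠ 0)
    (hg : orderOf g = p ^ m) (hh : orderOf h = p ^ m') :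
    zpowers g ⊓ zpowers h = ⊥ ↔ ¬∃ c : ℕ,
      (p : ZMod (p ^ e)) ^ (m - 1) * g.x = c * ((p : ZMod (p ^ e)) ^ (m' - 1) * h.x) ∧
        (p : ZMod n) ^ (m - 1) * g.y = c * ((p : ZMod n) ^ (m' - 1) * h.y) := by
  have hpow_pred {k : MetacyclicModel (p ^ e) n w} {r : ℕ} (hr : r ≠ 0) (hk : orderOf k = p ^ r) :
      k ^ p ^ (r - 1) = ⟨p ^ (r - 1) * k.x, p ^ (r - 1) * k.y⟩ ∧
        (p : ZMod (p ^ e)) * (p ^ (r - 1) * k.x) = 0 := by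
    have hx : (p : ZMod (p ^ e)) ^ (r - 1 + 1) * k.x = 0 := by
      rw [Nat.sub_add_cancel (Nat.pos_of_ne_zero hr)]
      exact ((orderOf_eq_prime_pow_iff hodd hw1 k hr).mp hk).1.1
    exact ⟨pow_prime_pow_eq_of_mul_x_eq_zero hodd hw1 hx, by rwa [← mul_assoc, ← pow_succ']⟩
  obtain ⟨hg', -⟩ := hpow_pred hm hg
  obtain ⟨hh', hhx⟩ := hpow_pred hm' hh
  rw [_root_.inf_zpowers_eq_bot_iff hm hg hh, hg', hh',
    mem_zpowers_iff_of_prime_mul_x_eq_zero hw1 hhx]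
  simp only [MetacyclicModel.mk.injEq]

end PrimePower

section Cases

variable {p d : ℕ} [Fact p.Prime]

theorem isExactBicyclicPair_mk_iff_of_eq {w : ZMod (p ^ d)} [Fact (w ^ p ^ d = 1)]
    (hodd : Odd p) (hw1 : (p : ZMod (p ^ d)) ∣ w - 1) (hd : d ≠ 0) (i j k l : ℤ) :
    IsExactBicyclicPair (p ^ d) (p ^ d) (⟨j, i⟩ : MetacyclicModel (p ^ d) (p ^ d) w) ⟨l, k⟩ ↔
      ¬(p : ℤ) ∣ i * l - j * k := by
  have hp := (Fact.out : p.Prime).ne_zero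
  have hord (x y : ℤ) : orderOf (⟨x, y⟩ : MetacyclicModel (p ^ d) (p ^ d) w) = p ^ d ↔
      ¬((x : ZMod p) = 0 ∧ (y : ZMod p) = 0) := by
    rw [orderOf_eq_prime_pow_iff hodd hw1 _ hd]
    simp only [natCast_pow_mul_intCast_eq_zero_iff hp, Nat.sub_self, pow_zero, one_dvd,
      and_self, true_and, Nat.sub_sub_self (Nat.one_le_iff_ne_zero.mpr hd), pow_one,
      ZMod.intCast_zmod_eq_zero_iff_dvd]
  rw [isExactBicyclicPair_iff_of_card_eq card_eq, ← ZMod.intCast_zmod_eq_zero_iff_dvd]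
  push_cast
  rw [← Ne, mul_sub_mul_ne_zero_iff, ← hord, ← hord, ZMod.natCast_zmod_surjective.exists]
  refine and_congr_right fun hα => and_congr_right fun hβ => ?_
  rw [inf_zpowers_eq_bot_iff hodd hw1 hd hd hα hβ]
  simp only [natCast_pow_pred_mul_eq_iff hp hd]

section LtCase

variable {e : ℕ} {w : ZMod (p ^ e)} [Fact (w ^ p ^ d = 1)]

lemma orderOf_mk_eq_prime_pow_d_iff (hodd : Odd p) (hw1 : (p : ZMod (p ^ e)) ∣ w - 1)
    (hd : d ≠ 0) (hde : d ≤ e) (i j : ℤ) :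
    orderOf (⟨j, i⟩ : MetacyclicModel (p ^ e) (p ^ d) w) = p ^ d ↔
      (p : ℤ) ^ (e - d) ∣ j ∧ ¬((p : ℤ) ^ (e - d + 1) ∣ j ∧ (p : ℤ) ∣ i) := by
  rw [orderOf_eq_prime_pow_iff hodd hw1 _ hd]
  simp only [natCast_pow_mul_intCast_eq_zero_iff (Fact.out : p.Prime).ne_zero, Nat.sub_self,
    pow_zero, one_dvd, and_true, show e - (d - 1) = e - d + 1 by omega,
    Nat.sub_sub_self (Nat.one_le_iff_ne_zero.mpr hd), pow_one]

lemma orderOf_mk_eq_prime_pow_e_iff (hodd : Odd p) (hw1 : (p : ZMod (p ^ e)) ∣ w - 1)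
    (hde : d < e) (k l : ℤ) :
    orderOf (⟨l, k⟩ : MetacyclicModel (p ^ e) (p ^ d) w) = p ^ e ↔ ¬(p : ℤ) ∣ l := by
  rw [orderOf_eq_prime_pow_iff hodd hw1 _ (by omega)]
  simp only [natCast_pow_mul_intCast_eq_zero_iff (Fact.out : p.Prime).ne_zero, Nat.sub_self,
    pow_zero, one_dvd, show d - e = 0 by omega, show d - (e - 1) = 0 by omega,
    show e - (e - 1) = 1 by omega, pow_one, and_self, and_true, true_and]

/-- For `d < e`, `β^(p^(e-1))` generates the subgroup of order `p` of `⟨a⟩`, so `α^(p^(d-1))`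
lies in it iff it lies in `⟨a⟩`, i.e. iff `p ∣ i`. -/
lemma inf_zpowers_mk_eq_bot_iff_of_lt (hodd : Odd p) (hw1 : (p : ZMod (p ^ e)) ∣ w - 1)
    (hd : d ≠ 0) (hde : d < e) {i j k l : ℤ}
    (hα : orderOf (⟨j, i⟩ : MetacyclicModel (p ^ e) (p ^ d) w) = p ^ d)
    (hβ : orderOf (⟨l, k⟩ : MetacyclicModel (p ^ e) (p ^ d) w) = p ^ e)
    (hj : (p : ℤ) ^ (e - d) ∣ j) (hl : ¬(p : ℤ) ∣ l) :
    zpowers (⟨j, i⟩ : MetacyclicModel (p ^ e) (p ^ d) w) ⊓ zpowers ⟨l, k⟩ = ⊥ ↔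
      ¬(p : ℤ) ∣ i := by
  have hp := (Fact.out : p.Prime).ne_zero
  rw [inf_zpowers_eq_bot_iff hodd hw1 hd (by omega) hα hβ]
  obtain ⟨j₀, rfl⟩ := hj
  have hx : (p : ZMod (p ^ e)) ^ (d - 1) * ((p ^ (e - d) * j₀ : ℤ) : ZMod (p ^ e)) =
      (p : ZMod (p ^ e)) ^ (e - 1) * (j₀ : ZMod (p ^ e)) := by
    push_cast
    rw [← mul_assoc, ← pow_add]
    congr 2
    omega
  have hy : (p : ZMod (p ^ d)) ^ (e - 1) = 0 := by
    rw [← Nat.cast_pow, ZMod.natCast_eq_zero_iff]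
    exact pow_dvd_pow _ (by omega)
  have hl' : (l : ZMod p) ≠ 0 := by rwa [Ne, ZMod.intCast_zmod_eq_zero_iff_dvd]
  simp only [hx, hy, zero_mul, mul_zero, natCast_pow_pred_mul_eq_iff hp (by omega : e ≠ 0),
    natCast_pow_mul_intCast_eq_zero_iff hp, Nat.sub_sub_self (Nat.one_le_iff_ne_zero.mpr hd),
    pow_one]
  refine not_congr ⟨fun ⟨_, _, h⟩ => h, fun h => ⟨((j₀ : ZMod p) / l).val, ?_, h⟩⟩
  rw [ZMod.natCast_zmod_val, div_mul_cancel₀ _ hl']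

theorem isExactBicyclicPair_mk_iff_of_lt (hodd : Odd p) (hw1 : (p : ZMod (p ^ e)) ∣ w - 1)
    (hd : d ≠ 0) (hde : d < e) (i j k l : ℤ) :
    IsExactBicyclicPair (p ^ d) (p ^ e) (⟨j, i⟩ : MetacyclicModel (p ^ e) (p ^ d) w) ⟨l, k⟩ ↔
      (p : ℤ) ^ (e - d) ∣ j ∧ ¬(p : ℤ) ∣ i * l := by
  have hα := orderOf_mk_eq_prime_pow_d_iff hodd hw1 hd hde.le i j
  have hβ := orderOf_mk_eq_prime_pow_e_iff hodd hw1 hde k l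
  rw [isExactBicyclicPair_iff_of_card_eq (card_eq.trans (mul_comm _ _))]
  constructor
  · rintro ⟨hα', hβ', h⟩
    obtain ⟨hj, -⟩ := hα.mp hα'
    have hl := hβ.mp hβ'
    have hi := (inf_zpowers_mk_eq_bot_iff_of_lt hodd hw1 hd hde hα' hβ' hj hl).mp h
    exact ⟨hj, (Nat.prime_iff_prime_int.mp Fact.out).not_dvd_mul hi hl⟩
  · rintro ⟨hj, hil⟩
    have hi : ¬(p : ℤ) ∣ i := fun h => hil (h.mul_right l)
    have hl : ¬(p : ℤ) ∣ l := fun h => hil (h.mul_left i)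
    have hα' := hα.mpr ⟨hj, fun h => hi h.2⟩
    have hβ' := hβ.mpr hl
    exact ⟨hα', hβ', (inf_zpowers_mk_eq_bot_iff_of_lt hodd hw1 hd hde hα' hβ' hj hl).mpr hi⟩

end LtCase

end Cases

end MetacyclicModel

abbrev M1Model (p d e f : ℕ) : Type :=
  MetacyclicModel (p ^ e) (p ^ d) (1 + (p : ZMod (p ^ e)) ^ f)

namespace M1

variable {p d e f : ℕ}

lemma a_pow_eq_one : M1a p d e f ^ p ^ e = 1 :=
  (map_pow _ _ _).symm.trans (PresentedGroup.one_of_mem (by simp [M1rels]))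

lemma b_pow_eq_one : M1b p d e f ^ p ^ d = 1 :=
  (map_pow _ _ _).symm.trans (PresentedGroup.one_of_mem (by simp [M1rels]))

lemma b_inv_mul_a_mul_b :
    (M1b p d e f)⁻¹ * M1a p d e f * M1b p d e f = M1a p d e f ^ (1 + p ^ f) := by
  have h := PresentedGroup.one_of_mem (rels := M1rels p d e f) (x := (FreeGroup.of 1)⁻¹ *
    FreeGroup.of 0 * FreeGroup.of 1 * (FreeGroup.of 0 ^ (1 + p ^ f))⁻¹) (by simp [M1rels])
  simp only [map_mul, map_inv, map_pow] at h
  exact mul_inv_eq_one.mp h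

lemma a_pow_val_natCast (k : ℕ) : M1a p d e f ^ (k : ZMod (p ^ e)).val = M1a p d e f ^ k := by
  rw [ZMod.val_natCast, ← pow_eq_pow_mod _ a_pow_eq_one]

lemma b_pow_val_natCast (k : ℕ) : M1b p d e f ^ (k : ZMod (p ^ d)).val = M1b p d e f ^ k := by
  rw [ZMod.val_natCast, ← pow_eq_pow_mod _ b_pow_eq_one]

variable [NeZero p] [Fact ((1 + (p : ZMod (p ^ e)) ^ f) ^ p ^ d = 1)]

lemma lift_eq_one_of_mem_rels {r : FreeGroup (Fin 2)} (hr : r ∈ M1rels p d e f) :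
    FreeGroup.lift (![⟨1, 0⟩, ⟨0, 1⟩] : Fin 2 → M1Model p d e f) r = 1 := by
  simp only [M1rels, Set.mem_insert_iff, Set.mem_singleton_iff] at hr
  rcases hr with rfl | rfl | rfl <;>
    simp only [map_mul, map_inv, map_pow, FreeGroup.lift_apply_of, Matrix.cons_val_zero,
      Matrix.cons_val_one, Matrix.cons_val_fin_one]
  · rw [MetacyclicModel.mk_one_zero_pow, ZMod.natCast_self]
    rfl
  · rw [MetacyclicModel.mk_zero_one_pow, ZMod.natCast_self]
    rfl
  · rw [mul_inv_eq_one, MetacyclicModel.mk_one_zero_pow]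
    ext <;> simp [MetacyclicModel.pow_val_one]

def toModel : M1 p d e f →* M1Model p d e f :=
  PresentedGroup.toGroup fun _ => lift_eq_one_of_mem_rels

def ofModel : M1Model p d e f →* M1 p d e f where
  toFun g := M1b p d e f ^ g.y.val * M1a p d e f ^ g.x.val
  map_one' := by simp
  map_mul' g h := by
    have hx : g.x * (1 + (p : ZMod (p ^ e)) ^ f) ^ h.y.val + h.x =
        ((g.x.val * (1 + p ^ f) ^ h.y.val + h.x.val : ℕ) : ZMod (p ^ e)) := by
      push_cast [ZMod.natCast_zmod_val]; rfl
    rw [MetacyclicModel.mul_x, MetacyclicModel.mul_y, hx, a_pow_val_natCast, ZMod.val_add,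
      ← pow_eq_pow_mod _ b_pow_eq_one, mul_assoc, ← mul_assoc (M1a p d e f ^ _),
      pow_mul_pow_eq_of_inv_mul_mul_eq b_inv_mul_a_mul_b, pow_add, pow_add]
    group

lemma toModel_a : toModel (M1a p d e f) = ⟨1, 0⟩ := PresentedGroup.toGroup.of _

lemma toModel_b : toModel (M1b p d e f) = ⟨0, 1⟩ := PresentedGroup.toGroup.of _

lemma ofModel_mk (x : ZMod (p ^ e)) (y : ZMod (p ^ d)) :
    ofModel (⟨x, y⟩ : M1Model p d e f) = M1b p d e f ^ y.val * M1a p d e f ^ x.val :=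
  rfl

lemma ofModel_comp_toModel : ofModel.comp toModel = MonoidHom.id (M1 p d e f) := by
  refine PresentedGroup.ext fun i => ?_
  fin_cases i
  · show ofModel (toModel (M1a p d e f)) = M1a p d e f
    rw [toModel_a, ofModel_mk, ZMod.val_zero, pow_zero, one_mul,
      ← Nat.cast_one (R := ZMod (p ^ e)), a_pow_val_natCast, pow_one]
  · show ofModel (toModel (M1b p d e f)) = M1b p d e f
    rw [toModel_b, ofModel_mk, ZMod.val_zero, pow_zero, mul_one,
      ← Nat.cast_one (R := ZMod (p ^ d)), b_pow_val_natCast, pow_one]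

lemma toModel_comp_ofModel : toModel.comp ofModel = MonoidHom.id (M1Model p d e f) :=
  MonoidHom.ext fun ⟨x, y⟩ => by
    rw [MonoidHom.comp_apply, ofModel_mk, map_mul, map_pow, map_pow, toModel_a, toModel_b,
      MetacyclicModel.mk_one_zero_pow, MetacyclicModel.mk_zero_one_pow,
      MetacyclicModel.mk_zero_mul_mk_zero, ZMod.natCast_zmod_val, ZMod.natCast_zmod_val]
    rfl

def equivModel (p d e f : ℕ) [NeZero p] [Fact ((1 + (p : ZMod (p ^ e)) ^ f) ^ p ^ d = 1)] :
    M1 p d e f ≃* M1Model p d e f :=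
  toModel.toMulEquiv ofModel ofModel_comp_toModel toModel_comp_ofModel

lemma equivModel_b_zpow_mul_a_zpow (i j : ℤ) :
    equivModel p d e f (M1b p d e f ^ i * M1a p d e f ^ j) = ⟨j, i⟩ := by
  show toModel (M1b p d e f ^ i * M1a p d e f ^ j) = _
  rw [map_mul, map_zpow, map_zpow, toModel_a, toModel_b, MetacyclicModel.mk_one_zero_zpow,
    MetacyclicModel.mk_zero_one_zpow, MetacyclicModel.mk_zero_mul_mk_zero]

end M1

/-- For `G = M₁(p,d,e,f)` with canonical generators `a, b`, and integers
`i, j, k, l`, set `α = bⁱaʲ`, `β = bᵏaˡ`. If `d = e`, then `(α, β)` is an exact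
`(p^d,p^e)`-bicyclic pair iff `il - jk ≢ 0 (mod p)`; if `d < e`, then `(α, β)` is an exact
`(p^d,p^e)`-bicyclic pair iff `p^(e-d) ∣ j` and `p ∤ il`. -/
theorem stmt_6 (p d e f : ℕ) (hp : p.Prime) (hodd : Odd p)
    (hcond : (1 ≤ d ∧ d ≤ f ∧ f ≤ e ∧ e ≤ d + f) ∨ (1 ≤ f ∧ f < d ∧ d < e ∧ e ≤ d + f))
    (i j k l : ℤ) :
    (d = e →
      (IsExactBicyclicPair (p ^ d) (p ^ e)
          (M1b p d e f ^ i * M1a p d e f ^ j) (M1b p d e f ^ k * M1a p d e f ^ l) ↔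
        ¬ (p : ℤ) ∣ (i * l - j * k))) ∧
    (d < e →
      (IsExactBicyclicPair (p ^ d) (p ^ e)
          (M1b p d e f ^ i * M1a p d e f ^ j) (M1b p d e f ^ k * M1a p d e f ^ l) ↔
        ((p : ℤ) ^ (e - d) ∣ j ∧ ¬ (p : ℤ) ∣ i * l))) := by
  obtain ⟨hd, hf, hedf⟩ : 1 ≤ d ∧ 1 ≤ f ∧ e ≤ d + f := by omega
  have := Fact.mk hp
  have : Fact ((1 + (p : ZMod (p ^ e)) ^ f) ^ p ^ d = 1) :=
    ⟨one_add_prime_pow_pow_eq_one hp hodd hf hedf⟩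
  have hw1 : (p : ZMod (p ^ e)) ∣ (1 + (p : ZMod (p ^ e)) ^ f) - 1 := by
    rw [add_sub_cancel_left]
    exact dvd_pow_self _ (by omega)
  simp only [← isExactBicyclicPair_map_iff (M1.equivModel p d e f),
    M1.equivModel_b_zpow_mul_a_zpow]
  refine ⟨fun heq => ?_, fun hlt =>
    MetacyclicModel.isExactBicyclicPair_mk_iff_of_lt hodd hw1 (by omega) hlt i j k l⟩
  subst heq
  exact MetacyclicModel.isExactBicyclicPair_mk_iff_of_eq hodd hw1 (by omega) i j k l
end
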